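/- arXiv:2101.01529 — 3 statements merged into one kernel-verified Lean document; each statement's English description precedes it below -/
import Mathlib

section
/- Let R be a commutative ring, let A, B, C, x, δ ∈ R satisfy δ² = B² − 4AC and 2Ax = −B + δ, let n be a natural number, and let a_0, …, a_n ∈ R satisfy Σ_{i=0}^{n} a_i x^i = 0. Define Q_a = Σ_{i=0}^{n} a_i (2A)^{n−i} Σ_{k : 2k ≤ i} C(i,2k) (B²−4AC)^k (−B)^{i−2k} and Q_b = Σ_{i=0}^{n} a_i (2A)^{n−i} Σ_{k : 2k+1 ≤ i} C(i,2k+1) (B²−4AC)^k (−B)^{i−2k−1}. Then Q_a + δ·Q_b = 0 and consequently Q_a² − (B²−4AC)·Q_b² = 0. -/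
lemma key16 {R : Type*} [CommRing R] (B δ D : R) (hδ : δ ^ 2 = D) (i : ℕ) :
    (∑ k ∈ (Finset.range (i + 1)).filter fun k => 2 * k ≤ i,
        (i.choose (2 * k) : R) * D ^ k * (-B) ^ (i - 2 * k)) +
      δ * ∑ k ∈ (Finset.range (i + 1)).filter fun k => 2 * k + 1 ≤ i,
        (i.choose (2 * k + 1) : R) * D ^ k * (-B) ^ (i - 2 * k - 1)
    = (-B + δ) ^ i := by
  subst hδ
  have h : (-B + δ) ^ i
      = ∑ j ∈ Finset.range (i + 1), δ ^ j * (-B) ^ (i - j) * (i.choose j : R) := by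
    rw [add_comm, add_pow]
  rw [h, ← Finset.sum_filter_add_sum_filter_not (Finset.range (i + 1)) (fun j => Even j)]
  congr 1
  · refine Finset.sum_nbij' (fun k => 2 * k) (fun j => j / 2) ?_ ?_ ?_ ?_ ?_
    · intro k hk
      simp only [Finset.mem_filter, Finset.mem_range] at hk ⊢
      exact ⟨by omega, ⟨k, by ring⟩⟩
    · intro j hj
      simp only [Finset.mem_filter, Finset.mem_range] at hj ⊢
      obtain ⟨hj1, ⟨m, hm⟩⟩ := hj
      omega
    · intro k hk
      simp only [Finset.mem_filter, Finset.mem_range] at hk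
      omega
    · intro j hj
      simp only [Finset.mem_filter, Finset.mem_range] at hj
      obtain ⟨hj1, ⟨m, hm⟩⟩ := hj
      omega
    · intro k hk
      rw [← pow_mul]
      ring
  · rw [Finset.mul_sum]
    refine Finset.sum_nbij' (fun k => 2 * k + 1) (fun j => j / 2) ?_ ?_ ?_ ?_ ?_
    · intro k hk
      simp only [Finset.mem_filter, Finset.mem_range] at hk ⊢
      refine ⟨by omega, ?_⟩
      rw [Nat.even_add_one]
      simp [Nat.even_iff]
    · intro j hj
      simp only [Finset.mem_filter, Finset.mem_range, Nat.even_iff] at hj ⊢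
      omega
    · intro k hk
      simp only [Finset.mem_filter, Finset.mem_range] at hk
      omega
    · intro j hj
      simp only [Finset.mem_filter, Finset.mem_range, Nat.even_iff] at hj
      omega
    · intro k hk
      simp only [Finset.mem_filter, Finset.mem_range] at hk
      have h1 : i - 2 * k - 1 = i - (2 * k + 1) := by omega
      have h2 : δ ^ (2 * k + 1) = (δ ^ 2) ^ k * δ := by rw [pow_succ, pow_mul]
      rw [h1, h2]
      ring

theorem stmt16 {R : Type*} [CommRing R] (A B C x δ : R)
    (hδ : δ ^ 2 = B ^ 2 - 4 * A * C) (hx : 2 * A * x = -B + δ)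
    (n : ℕ) (a : ℕ → R) (hsum : ∑ i ∈ Finset.range (n + 1), a i * x ^ i = 0) :
    (∑ i ∈ Finset.range (n + 1), a i * (2 * A) ^ (n - i) *
        ∑ k ∈ (Finset.range (i + 1)).filter fun k => 2 * k ≤ i,
          (i.choose (2 * k) : R) * (B ^ 2 - 4 * A * C) ^ k * (-B) ^ (i - 2 * k)) +
      δ * (∑ i ∈ Finset.range (n + 1), a i * (2 * A) ^ (n - i) *
        ∑ k ∈ (Finset.range (i + 1)).filter fun k => 2 * k + 1 ≤ i,
          (i.choose (2 * k + 1) : R) * (B ^ 2 - 4 * A * C) ^ k * (-B) ^ (i - 2 * k - 1)) = 0 ∧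
    (∑ i ∈ Finset.range (n + 1), a i * (2 * A) ^ (n - i) *
        ∑ k ∈ (Finset.range (i + 1)).filter fun k => 2 * k ≤ i,
          (i.choose (2 * k) : R) * (B ^ 2 - 4 * A * C) ^ k * (-B) ^ (i - 2 * k)) ^ 2 -
      (B ^ 2 - 4 * A * C) *
      (∑ i ∈ Finset.range (n + 1), a i * (2 * A) ^ (n - i) *
        ∑ k ∈ (Finset.range (i + 1)).filter fun k => 2 * k + 1 ≤ i,
          (i.choose (2 * k + 1) : R) * (B ^ 2 - 4 * A * C) ^ k * (-B) ^ (i - 2 * k - 1)) ^ 2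
      = 0 := by
  set Qa := ∑ i ∈ Finset.range (n + 1), a i * (2 * A) ^ (n - i) *
        ∑ k ∈ (Finset.range (i + 1)).filter fun k => 2 * k ≤ i,
          (i.choose (2 * k) : R) * (B ^ 2 - 4 * A * C) ^ k * (-B) ^ (i - 2 * k) with hQa
  set Qb := ∑ i ∈ Finset.range (n + 1), a i * (2 * A) ^ (n - i) *
        ∑ k ∈ (Finset.range (i + 1)).filter fun k => 2 * k + 1 ≤ i,
          (i.choose (2 * k + 1) : R) * (B ^ 2 - 4 * A * C) ^ k * (-B) ^ (i - 2 * k - 1) with hQb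
  have h1 : Qa + δ * Qb = 0 := by
    rw [hQa, hQb, Finset.mul_sum, ← Finset.sum_add_distrib]
    have : ∀ i ∈ Finset.range (n + 1),
        (a i * (2 * A) ^ (n - i) *
          ∑ k ∈ (Finset.range (i + 1)).filter fun k => 2 * k ≤ i,
            (i.choose (2 * k) : R) * (B ^ 2 - 4 * A * C) ^ k * (-B) ^ (i - 2 * k)) +
        δ * (a i * (2 * A) ^ (n - i) *
          ∑ k ∈ (Finset.range (i + 1)).filter fun k => 2 * k + 1 ≤ i,
            (i.choose (2 * k + 1) : R) * (B ^ 2 - 4 * A * C) ^ k * (-B) ^ (i - 2 * k - 1))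
        = (2 * A) ^ n * (a i * x ^ i) := by
      intro i hi
      simp only [Finset.mem_range] at hi
      have hkey := key16 B δ (B ^ 2 - 4 * A * C) hδ i
      have : a i * (2 * A) ^ (n - i) * ((∑ k ∈ (Finset.range (i + 1)).filter
              fun k => 2 * k ≤ i,
              (i.choose (2 * k) : R) * (B ^ 2 - 4 * A * C) ^ k * (-B) ^ (i - 2 * k)) +
            δ * ∑ k ∈ (Finset.range (i + 1)).filter fun k => 2 * k + 1 ≤ i,
              (i.choose (2 * k + 1) : R) * (B ^ 2 - 4 * A * C) ^ k * (-B) ^ (i - 2 * k - 1))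
          = a i * (2 * A) ^ (n - i) * (-B + δ) ^ i := by rw [hkey]
      calc _ = a i * (2 * A) ^ (n - i) * ((∑ k ∈ (Finset.range (i + 1)).filter
              fun k => 2 * k ≤ i,
              (i.choose (2 * k) : R) * (B ^ 2 - 4 * A * C) ^ k * (-B) ^ (i - 2 * k)) +
            δ * ∑ k ∈ (Finset.range (i + 1)).filter fun k => 2 * k + 1 ≤ i,
              (i.choose (2 * k + 1) : R) * (B ^ 2 - 4 * A * C) ^ k * (-B) ^ (i - 2 * k - 1)) := by
              ring
        _ = a i * (2 * A) ^ (n - i) * (-B + δ) ^ i := this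
        _ = a i * (2 * A) ^ (n - i) * (2 * A * x) ^ i := by rw [hx]
        _ = a i * ((2 * A) ^ (n - i) * (2 * A) ^ i) * x ^ i := by rw [mul_pow]; ring
        _ = (2 * A) ^ n * (a i * x ^ i) := by
              rw [← pow_add, Nat.sub_add_cancel (by omega)]; ring
    rw [Finset.sum_congr rfl this, ← Finset.mul_sum, hsum, mul_zero]
  refine ⟨h1, ?_⟩
  have h2 : Qa = -(δ * Qb) := by linear_combination h1
  rw [h2, ← hδ]; ring
end

section
/- The set of rational numbers a such that both a and 1−a are of the form ±2^m·3^n with m, n ∈ ℤ (equivalently, such that both a and 1−a are units of the ring ℤ[1/6]) is exactly the 21-element set {2, 1/2, −1, 3, 1/3, 2/3, 3/2, −1/2, −2, 4, 1/4, 4/3, 3/4, −1/3, −3, −1/8, 1/9, 9/8, 8/9, 9, −8}. -/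
lemma pow_mod_cycle (x n m a : ℕ) (h : x ^ n % m = 1 % m) :
    x ^ a % m = x ^ (a % n) % m := by
  conv_lhs => rw [← Nat.div_add_mod a n]
  rw [pow_add, pow_mul, Nat.mul_mod, Nat.pow_mod, h, ← Nat.pow_mod, one_pow, ← Nat.mul_mod, one_mul]

lemma pow2_inj {a k : ℕ} (h : 2^a = 2^k) : a = k := Nat.pow_right_injective (by norm_num) h
lemma pow3_inj {a k : ℕ} (h : 3^a = 3^k) : a = k := Nat.pow_right_injective (by norm_num) h

/-- catalan-type: 2^a = 3^b + 1 -/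
lemma lemA (a b : ℕ) (h : 2^a = 3^b + 1) : (a = 1 ∧ b = 0) ∨ (a = 2 ∧ b = 1) := by
  have h38 : 3^b % 8 = 1 ∨ 3^b % 8 = 3 := by
    have h8 : 3 ^ b % 8 = 3 ^ (b % 2) % 8 := pow_mod_cycle 3 2 8 b (by norm_num)
    have : b % 2 = 0 ∨ b % 2 = 1 := by omega
    rcases this with h' | h' <;> rw [h'] at h8 <;> norm_num at h8 <;> tauto
  have ha : a < 3 := by
    by_contra h'
    push_neg at h'
    obtain ⟨k, rfl⟩ : ∃ k, a = 3 + k := ⟨a - 3, by omega⟩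
    rw [pow_add] at h
    generalize 2^k = u at h
    generalize hv : 3^b = v at h h38
    omega
  interval_cases a
  · have : 0 < 3^b := by positivity
    omega
  · left
    have hb : 3^b = 3^0 := by omega
    exact ⟨rfl, pow3_inj hb⟩
  · right
    have hb : 3^b = 3^1 := by omega
    exact ⟨rfl, pow3_inj hb⟩

/-- 3^b = 2^a + 1 -/
lemma lemB (a b : ℕ) (h : 3^b = 2^a + 1) : (a = 1 ∧ b = 1) ∨ (a = 3 ∧ b = 2) := by
  have hb : b < 3 := by
    by_contra h'
    push_neg at h'
    have hd : 27 ∣ 3^b := by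
      obtain ⟨k, rfl⟩ : ∃ k, b = 3 + k := ⟨b - 3, by omega⟩
      exact ⟨3^k, by rw [pow_add]; norm_num⟩
    have h27 : 2^a % 27 = 26 := by
      generalize 2^a = u at h
      generalize 3^b = v at h hd
      omega
    have h9 : a % 18 = 9 := by
      have hcyc : 2^a % 27 = 2^(a % 18) % 27 := pow_mod_cycle 2 18 27 a (by norm_num)
      have hlt : a % 18 < 18 := Nat.mod_lt _ (by norm_num)
      have key : ∀ r, r < 18 → 2^r % 27 = 26 → r = 9 := by decide
      exact key _ hlt (by omega)
    have h19 : 2^a % 19 = 18 := by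
      rw [pow_mod_cycle 2 18 19 a (by norm_num), h9]
      norm_num
    have h19b : 3^b % 19 = 0 := by
      generalize 2^a = u at h h19
      generalize 3^b = v at h
      omega
    have hne : 3^b % 19 ≠ 0 := by
      rw [pow_mod_cycle 3 18 19 b (by norm_num)]
      have hlt : b % 18 < 18 := Nat.mod_lt _ (by norm_num)
      have key : ∀ r, r < 18 → 3^r % 19 ≠ 0 := by decide
      exact key _ hlt
    exact hne h19b
  interval_cases b
  · have : 0 < 2^a := by positivity
    omega
  · left
    have : 2^a = 2^1 := by omega
    exact ⟨pow2_inj this, rfl⟩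
  · right
    have : 2^a = 2^3 := by omega
    exact ⟨pow2_inj this, rfl⟩


lemma eq_two (E F : ℕ) (h : 2^E*3^F = 2) : E = 1 ∧ F = 0 := by
  have hF : F = 0 := by
    rcases F with _|F'
    · rfl
    · exfalso
      have h3 : (3:ℕ) ∣ 2 := ⟨2^E*3^F', by rw [pow_succ] at h; linarith⟩
      norm_num at h3
  subst hF
  rw [pow_zero, mul_one] at h
  exact ⟨pow2_inj (h.trans (by norm_num)), rfl⟩

set_option maxHeartbeats 2000000 in
lemma keyPP (A B C D E F : ℕ) (h : 2^A*3^B + 2^C*3^D = 2^E*3^F)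
    (h2 : A = 0 ∨ C = 0 ∨ E = 0) (h3 : B = 0 ∨ D = 0 ∨ F = 0) :
    (A=1∧B=0∧C=0∧D=0∧E=0∧F=1) ∨ (A=3∧B=0∧C=0∧D=0∧E=0∧F=2) ∨
    (A=0∧B=0∧C=1∧D=0∧E=0∧F=1) ∨ (A=0∧B=0∧C=3∧D=0∧E=0∧F=2) ∨
    (A=0∧B=0∧C=0∧D=0∧E=1∧F=0) ∨ (A=0∧B=1∧C=0∧D=0∧E=2∧F=0) ∨
    (A=0∧B=0∧C=0∧D=1∧E=2∧F=0) := by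
  have hac : A = 0 ∨ C = 0 := by
    by_contra hx
    push_neg at hx
    obtain ⟨hA, hC⟩ := hx
    have hE : E = 0 := by tauto
    obtain ⟨A', rfl⟩ : ∃ k, A = k + 1 := ⟨A - 1, (Nat.succ_pred_eq_of_pos (Nat.pos_of_ne_zero hA)).symm⟩
    obtain ⟨C', rfl⟩ : ∃ k, C = k + 1 := ⟨C - 1, (Nat.succ_pred_eq_of_pos (Nat.pos_of_ne_zero hC)).symm⟩
    subst hE
    simp only [pow_zero, one_mul, pow_succ] at h
    have hdvd : 2 ∣ 3^F := ⟨2^A'*3^B + 2^C'*3^D, by linarith⟩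
    have h23 := Nat.Prime.dvd_of_dvd_pow Nat.prime_two hdvd
    norm_num at h23
  have hae : A = 0 ∨ E = 0 := by
    by_contra hx
    push_neg at hx
    obtain ⟨hA, hE⟩ := hx
    have hC : C = 0 := by tauto
    obtain ⟨A', rfl⟩ : ∃ k, A = k + 1 := ⟨A - 1, (Nat.succ_pred_eq_of_pos (Nat.pos_of_ne_zero hA)).symm⟩
    obtain ⟨E', rfl⟩ : ∃ k, E = k + 1 := ⟨E - 1, (Nat.succ_pred_eq_of_pos (Nat.pos_of_ne_zero hE)).symm⟩
    subst hC
    simp only [pow_zero, one_mul, pow_succ] at h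
    have hdvd : 2 ∣ 3^D := by
      have e : 2*(2^A'*3^B) + 3^D = 2*(2^E'*3^F) := by linarith
      generalize 2^A'*3^B = u at e
      generalize 2^E'*3^F = v at e
      clear h
      generalize 3^D = w at e ⊢
      omega
    have h23 := Nat.Prime.dvd_of_dvd_pow Nat.prime_two hdvd
    norm_num at h23
  have hce : C = 0 ∨ E = 0 := by
    by_contra hx
    push_neg at hx
    obtain ⟨hC, hE⟩ := hx
    have hA : A = 0 := by tauto
    obtain ⟨C', rfl⟩ : ∃ k, C = k + 1 := ⟨C - 1, (Nat.succ_pred_eq_of_pos (Nat.pos_of_ne_zero hC)).symm⟩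
    obtain ⟨E', rfl⟩ : ∃ k, E = k + 1 := ⟨E - 1, (Nat.succ_pred_eq_of_pos (Nat.pos_of_ne_zero hE)).symm⟩
    subst hA
    simp only [pow_zero, one_mul, pow_succ] at h
    have hdvd : 2 ∣ 3^B := by
      have e : 3^B + 2*(2^C'*3^D) = 2*(2^E'*3^F) := by linarith
      generalize 2^C'*3^D = u at e
      generalize 2^E'*3^F = v at e
      clear h
      generalize 3^B = w at e ⊢
      omega
    have h23 := Nat.Prime.dvd_of_dvd_pow Nat.prime_two hdvd
    norm_num at h23
  have hbd : B = 0 ∨ D = 0 := by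
    by_contra hx
    push_neg at hx
    obtain ⟨hB, hD⟩ := hx
    have hF : F = 0 := by tauto
    obtain ⟨B', rfl⟩ : ∃ k, B = k + 1 := ⟨B - 1, (Nat.succ_pred_eq_of_pos (Nat.pos_of_ne_zero hB)).symm⟩
    obtain ⟨D', rfl⟩ : ∃ k, D = k + 1 := ⟨D - 1, (Nat.succ_pred_eq_of_pos (Nat.pos_of_ne_zero hD)).symm⟩
    subst hF
    simp only [pow_zero, mul_one, pow_succ] at h
    have hdvd : 3 ∣ 2^E := by
      have e : 3*(2^A*3^B') + 3*(2^C*3^D') = 2^E := by linarith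
      generalize 2^A*3^B' = u at e
      generalize 2^C*3^D' = v at e
      clear h
      generalize 2^E = w at e ⊢
      omega
    have h32 := Nat.Prime.dvd_of_dvd_pow Nat.prime_three hdvd
    norm_num at h32
  have hbf : B = 0 ∨ F = 0 := by
    by_contra hx
    push_neg at hx
    obtain ⟨hB, hF⟩ := hx
    have hD : D = 0 := by tauto
    obtain ⟨B', rfl⟩ : ∃ k, B = k + 1 := ⟨B - 1, (Nat.succ_pred_eq_of_pos (Nat.pos_of_ne_zero hB)).symm⟩
    obtain ⟨F', rfl⟩ : ∃ k, F = k + 1 := ⟨F - 1, (Nat.succ_pred_eq_of_pos (Nat.pos_of_ne_zero hF)).symm⟩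
    subst hD
    simp only [pow_zero, mul_one, pow_succ] at h
    have hdvd : 3 ∣ 2^C := by
      have e : 3*(2^A*3^B') + 2^C = 3*(2^E*3^F') := by linarith
      generalize 2^A*3^B' = u at e
      generalize 2^E*3^F' = v at e
      clear h
      generalize 2^C = w at e ⊢
      omega
    have h32 := Nat.Prime.dvd_of_dvd_pow Nat.prime_three hdvd
    norm_num at h32
  have hdf : D = 0 ∨ F = 0 := by
    by_contra hx
    push_neg at hx
    obtain ⟨hD, hF⟩ := hx
    have hB : B = 0 := by tauto
    obtain ⟨D', rfl⟩ : ∃ k, D = k + 1 := ⟨D - 1, (Nat.succ_pred_eq_of_pos (Nat.pos_of_ne_zero hD)).symm⟩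
    obtain ⟨F', rfl⟩ : ∃ k, F = k + 1 := ⟨F - 1, (Nat.succ_pred_eq_of_pos (Nat.pos_of_ne_zero hF)).symm⟩
    subst hB
    simp only [pow_zero, mul_one, pow_succ] at h
    have hdvd : 3 ∣ 2^A := by
      have e : 2^A + 3*(2^C*3^D') = 3*(2^E*3^F') := by linarith
      generalize 2^C*3^D' = u at e
      generalize 2^E*3^F' = v at e
      clear h
      generalize 2^A = w at e ⊢
      omega
    have h32 := Nat.Prime.dvd_of_dvd_pow Nat.prime_three hdvd
    norm_num at h32
  have t2 : (C=0∧E=0)∨(A=0∧E=0)∨(A=0∧C=0) := by clear h; omega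
  have t3 : (D=0∧F=0)∨(B=0∧F=0)∨(B=0∧D=0) := by clear h; omega
  rcases t2 with ⟨hh1,hh2⟩|⟨hh1,hh2⟩|⟨hh1,hh2⟩
  · rcases t3 with ⟨hh3,hh4⟩|⟨hh3,hh4⟩|⟨hh3,hh4⟩
    · -- C=E=0, D=F=0 : 2^A*3^B + 1 = 1
      rw [hh1, hh2, hh3, hh4] at h
      simp only [pow_zero, one_mul, mul_one] at h
      have : 0 < 2^A*3^B := by positivity
      linarith
    · -- C=E=0, B=F=0 : 2^A + 3^D = 1
      rw [hh1, hh2, hh3, hh4] at h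
      simp only [pow_zero, one_mul, mul_one] at h
      have i1 : 1 ≤ 2^A := Nat.one_le_pow _ _ (by norm_num)
      have i2 : 1 ≤ 3^D := Nat.one_le_pow _ _ (by norm_num)
      linarith
    · -- C=E=0, B=D=0 : 2^A + 1 = 3^F
      rw [hh1, hh2, hh3, hh4] at h
      simp only [pow_zero, one_mul, mul_one] at h
      rcases lemB A F (by linarith) with ⟨e1,e2⟩|⟨e1,e2⟩ <;> clear h <;> subst_vars <;> decide
  · rcases t3 with ⟨hh3,hh4⟩|⟨hh3,hh4⟩|⟨hh3,hh4⟩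
    · -- A=E=0, D=F=0 : 3^B + 2^C = 1
      rw [hh1, hh2, hh3, hh4] at h
      simp only [pow_zero, one_mul, mul_one] at h
      have i1 : 1 ≤ 2^C := Nat.one_le_pow _ _ (by norm_num)
      have i2 : 1 ≤ 3^B := Nat.one_le_pow _ _ (by norm_num)
      linarith
    · -- A=E=0, B=F=0 : 1 + 2^C*3^D = 1
      rw [hh1, hh2, hh3, hh4] at h
      simp only [pow_zero, one_mul, mul_one] at h
      have : 0 < 2^C*3^D := by positivity
      linarith
    · -- A=E=0, B=D=0 : 1 + 2^C = 3^F
      rw [hh1, hh2, hh3, hh4] at h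
      simp only [pow_zero, one_mul, mul_one] at h
      rcases lemB C F (by linarith) with ⟨e1,e2⟩|⟨e1,e2⟩ <;> clear h <;> subst_vars <;> decide
  · rcases t3 with ⟨hh3,hh4⟩|⟨hh3,hh4⟩|⟨hh3,hh4⟩
    · -- A=C=0, D=F=0 : 3^B + 1 = 2^E
      rw [hh1, hh2, hh3, hh4] at h
      simp only [pow_zero, one_mul, mul_one] at h
      rcases lemA E B (by linarith) with ⟨e1,e2⟩|⟨e1,e2⟩ <;> clear h <;> subst_vars <;> decide
    · -- A=C=0, B=F=0 : 1 + 3^D = 2^E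
      rw [hh1, hh2, hh3, hh4] at h
      simp only [pow_zero, one_mul, mul_one] at h
      rcases lemA E D (by linarith) with ⟨e1,e2⟩|⟨e1,e2⟩ <;> clear h <;> subst_vars <;> decide
    · -- A=C=0, B=D=0 : 1 + 1 = 2^E*3^F
      rw [hh1, hh2, hh3, hh4] at h
      simp only [pow_zero, one_mul, mul_one] at h
      rcases eq_two E F (by linarith) with ⟨e1,e2⟩
      clear h
      subst_vars
      decide

lemma keyPM (A B C D E F : ℕ) (h : 2^A*3^B = 2^E*3^F + 2^C*3^D)
    (h2 : A = 0 ∨ C = 0 ∨ E = 0) (h3 : B = 0 ∨ D = 0 ∨ F = 0) :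
    (A=1∧B=0∧C=0∧D=0∧E=0∧F=0) ∨ (A=2∧B=0∧C=0∧D=1∧E=0∧F=0) ∨
    (A=2∧B=0∧C=0∧D=0∧E=0∧F=1) ∨ (A=0∧B=1∧C=1∧D=0∧E=0∧F=0) ∨
    (A=0∧B=2∧C=3∧D=0∧E=0∧F=0) ∨ (A=0∧B=1∧C=0∧D=0∧E=1∧F=0) ∨
    (A=0∧B=2∧C=0∧D=0∧E=3∧F=0) := by
  have hac : A = 0 ∨ C = 0 := by
    by_contra hx
    push_neg at hx
    obtain ⟨hA, hC⟩ := hx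
    have hE : E = 0 := by tauto
    obtain ⟨A', rfl⟩ : ∃ k, A = k + 1 := ⟨A - 1, (Nat.succ_pred_eq_of_pos (Nat.pos_of_ne_zero hA)).symm⟩
    obtain ⟨C', rfl⟩ : ∃ k, C = k + 1 := ⟨C - 1, (Nat.succ_pred_eq_of_pos (Nat.pos_of_ne_zero hC)).symm⟩
    subst hE
    simp only [pow_zero, one_mul, pow_succ] at h
    have hdvd : 2 ∣ 3^F := by
      have e : 2*(2^A'*3^B) = 3^F + 2*(2^C'*3^D) := by linarith
      clear h
      generalize 2^A'*3^B = u at e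
      generalize 2^C'*3^D = v at e
      generalize 3^F = w at e ⊢
      omega
    have h23 := Nat.Prime.dvd_of_dvd_pow Nat.prime_two hdvd
    norm_num at h23
  have hae : A = 0 ∨ E = 0 := by
    by_contra hx
    push_neg at hx
    obtain ⟨hA, hE⟩ := hx
    have hC : C = 0 := by tauto
    obtain ⟨A', rfl⟩ : ∃ k, A = k + 1 := ⟨A - 1, (Nat.succ_pred_eq_of_pos (Nat.pos_of_ne_zero hA)).symm⟩
    obtain ⟨E', rfl⟩ : ∃ k, E = k + 1 := ⟨E - 1, (Nat.succ_pred_eq_of_pos (Nat.pos_of_ne_zero hE)).symm⟩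
    subst hC
    simp only [pow_zero, one_mul, pow_succ] at h
    have hdvd : 2 ∣ 3^D := by
      have e : 2*(2^A'*3^B) = 2*(2^E'*3^F) + 3^D := by linarith
      clear h
      generalize 2^A'*3^B = u at e
      generalize 2^E'*3^F = v at e
      generalize 3^D = w at e ⊢
      omega
    have h23 := Nat.Prime.dvd_of_dvd_pow Nat.prime_two hdvd
    norm_num at h23
  have hce : C = 0 ∨ E = 0 := by
    by_contra hx
    push_neg at hx
    obtain ⟨hC, hE⟩ := hx
    have hA : A = 0 := by tauto
    obtain ⟨C', rfl⟩ : ∃ k, C = k + 1 := ⟨C - 1, (Nat.succ_pred_eq_of_pos (Nat.pos_of_ne_zero hC)).symm⟩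
    obtain ⟨E', rfl⟩ : ∃ k, E = k + 1 := ⟨E - 1, (Nat.succ_pred_eq_of_pos (Nat.pos_of_ne_zero hE)).symm⟩
    subst hA
    simp only [pow_zero, one_mul, pow_succ] at h
    have hdvd : 2 ∣ 3^B := by
      have e : 3^B = 2*(2^E'*3^F) + 2*(2^C'*3^D) := by linarith
      clear h
      generalize 2^C'*3^D = u at e
      generalize 2^E'*3^F = v at e
      generalize 3^B = w at e ⊢
      omega
    have h23 := Nat.Prime.dvd_of_dvd_pow Nat.prime_two hdvd
    norm_num at h23
  have hbd : B = 0 ∨ D = 0 := by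
    by_contra hx
    push_neg at hx
    obtain ⟨hB, hD⟩ := hx
    have hF : F = 0 := by tauto
    obtain ⟨B', rfl⟩ : ∃ k, B = k + 1 := ⟨B - 1, (Nat.succ_pred_eq_of_pos (Nat.pos_of_ne_zero hB)).symm⟩
    obtain ⟨D', rfl⟩ : ∃ k, D = k + 1 := ⟨D - 1, (Nat.succ_pred_eq_of_pos (Nat.pos_of_ne_zero hD)).symm⟩
    subst hF
    simp only [pow_zero, mul_one, pow_succ] at h
    have hdvd : 3 ∣ 2^E := by
      have e : 3*(2^A*3^B') = 2^E + 3*(2^C*3^D') := by linarith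
      clear h
      generalize 2^A*3^B' = u at e
      generalize 2^C*3^D' = v at e
      generalize 2^E = w at e ⊢
      omega
    have h32 := Nat.Prime.dvd_of_dvd_pow Nat.prime_three hdvd
    norm_num at h32
  have hbf : B = 0 ∨ F = 0 := by
    by_contra hx
    push_neg at hx
    obtain ⟨hB, hF⟩ := hx
    have hD : D = 0 := by tauto
    obtain ⟨B', rfl⟩ : ∃ k, B = k + 1 := ⟨B - 1, (Nat.succ_pred_eq_of_pos (Nat.pos_of_ne_zero hB)).symm⟩
    obtain ⟨F', rfl⟩ : ∃ k, F = k + 1 := ⟨F - 1, (Nat.succ_pred_eq_of_pos (Nat.pos_of_ne_zero hF)).symm⟩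
    subst hD
    simp only [pow_zero, mul_one, pow_succ] at h
    have hdvd : 3 ∣ 2^C := by
      have e : 3*(2^A*3^B') = 3*(2^E*3^F') + 2^C := by linarith
      clear h
      generalize 2^A*3^B' = u at e
      generalize 2^E*3^F' = v at e
      generalize 2^C = w at e ⊢
      omega
    have h32 := Nat.Prime.dvd_of_dvd_pow Nat.prime_three hdvd
    norm_num at h32
  have hdf : D = 0 ∨ F = 0 := by
    by_contra hx
    push_neg at hx
    obtain ⟨hD, hF⟩ := hx
    have hB : B = 0 := by tauto
    obtain ⟨D', rfl⟩ : ∃ k, D = k + 1 := ⟨D - 1, (Nat.succ_pred_eq_of_pos (Nat.pos_of_ne_zero hD)).symm⟩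
    obtain ⟨F', rfl⟩ : ∃ k, F = k + 1 := ⟨F - 1, (Nat.succ_pred_eq_of_pos (Nat.pos_of_ne_zero hF)).symm⟩
    subst hB
    simp only [pow_zero, mul_one, pow_succ] at h
    have hdvd : 3 ∣ 2^A := by
      have e : 2^A = 3*(2^E*3^F') + 3*(2^C*3^D') := by linarith
      clear h
      generalize 2^C*3^D' = u at e
      generalize 2^E*3^F' = v at e
      generalize 2^A = w at e ⊢
      omega
    have h32 := Nat.Prime.dvd_of_dvd_pow Nat.prime_three hdvd
    norm_num at h32
  have t2 : (C=0∧E=0)∨(A=0∧E=0)∨(A=0∧C=0) := by clear h; omega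
  have t3 : (D=0∧F=0)∨(B=0∧F=0)∨(B=0∧D=0) := by clear h; omega
  rcases t2 with ⟨hh1,hh2⟩|⟨hh1,hh2⟩|⟨hh1,hh2⟩
  · rcases t3 with ⟨hh3,hh4⟩|⟨hh3,hh4⟩|⟨hh3,hh4⟩
    · -- C=E=0, D=F=0 : 2^A*3^B = 1 + 1
      rw [hh1, hh2, hh3, hh4] at h
      simp only [pow_zero, one_mul, mul_one] at h
      rcases eq_two A B (by linarith) with ⟨e1,e2⟩
      clear h
      subst_vars
      decide
    · -- C=E=0, B=F=0 : 2^A = 1 + 3^D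
      rw [hh1, hh2, hh3, hh4] at h
      simp only [pow_zero, one_mul, mul_one] at h
      rcases lemA A D (by linarith) with ⟨e1,e2⟩|⟨e1,e2⟩ <;> clear h <;> subst_vars <;> decide
    · -- C=E=0, B=D=0 : 2^A = 3^F + 1
      rw [hh1, hh2, hh3, hh4] at h
      simp only [pow_zero, one_mul, mul_one] at h
      rcases lemA A F (by linarith) with ⟨e1,e2⟩|⟨e1,e2⟩ <;> clear h <;> subst_vars <;> decide
  · rcases t3 with ⟨hh3,hh4⟩|⟨hh3,hh4⟩|⟨hh3,hh4⟩
    · -- A=E=0, D=F=0 : 3^B = 1 + 2^C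
      rw [hh1, hh2, hh3, hh4] at h
      simp only [pow_zero, one_mul, mul_one] at h
      rcases lemB C B (by linarith) with ⟨e1,e2⟩|⟨e1,e2⟩ <;> clear h <;> subst_vars <;> decide
    · -- A=E=0, B=F=0 : 1 = 1 + 2^C*3^D
      rw [hh1, hh2, hh3, hh4] at h
      simp only [pow_zero, one_mul, mul_one] at h
      have : 0 < 2^C*3^D := by positivity
      linarith
    · -- A=E=0, B=D=0 : 1 = 3^F + 2^C
      rw [hh1, hh2, hh3, hh4] at h
      simp only [pow_zero, one_mul, mul_one] at h
      have i1 : 1 ≤ 2^C := Nat.one_le_pow _ _ (by norm_num)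
      have i2 : 1 ≤ 3^F := Nat.one_le_pow _ _ (by norm_num)
      linarith
  · rcases t3 with ⟨hh3,hh4⟩|⟨hh3,hh4⟩|⟨hh3,hh4⟩
    · -- A=C=0, D=F=0 : 3^B = 2^E + 1
      rw [hh1, hh2, hh3, hh4] at h
      simp only [pow_zero, one_mul, mul_one] at h
      rcases lemB E B (by linarith) with ⟨e1,e2⟩|⟨e1,e2⟩ <;> clear h <;> subst_vars <;> decide
    · -- A=C=0, B=F=0 : 1 = 2^E + 3^D
      rw [hh1, hh2, hh3, hh4] at h
      simp only [pow_zero, one_mul, mul_one] at h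
      have i1 : 1 ≤ 2^E := Nat.one_le_pow _ _ (by norm_num)
      have i2 : 1 ≤ 3^D := Nat.one_le_pow _ _ (by norm_num)
      linarith
    · -- A=C=0, B=D=0 : 1 = 2^E*3^F + 1
      rw [hh1, hh2, hh3, hh4] at h
      simp only [pow_zero, one_mul, mul_one] at h
      have : 0 < 2^E*3^F := by positivity
      linarith

/-- `a` is of the form `±2^m · 3^n` with `m, n ∈ ℤ`, i.e. a unit of `ℤ[1/6]`. -/
def IsSixUnit (a : ℚ) : Prop :=
  ∃ m n : ℤ, a = 2 ^ m * 3 ^ n ∨ a = -(2 ^ m * 3 ^ n)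

set_option maxHeartbeats 1000000 in
theorem stmt18 :
    {a : ℚ | IsSixUnit a ∧ IsSixUnit (1 - a)} =
      ({2, 1/2, -1, 3, 1/3, 2/3, 3/2, -1/2, -2, 4, 1/4, 4/3, 3/4, -1/3, -3,
        -1/8, 1/9, 9/8, 8/9, 9, -8} : Set ℚ) := by
  ext a
  simp only [Set.mem_setOf_eq, Set.mem_insert_iff, Set.mem_singleton_iff]
  constructor
  · rintro ⟨hu1, hu2⟩
    obtain ⟨ε, m, n, hε, hx⟩ : ∃ (s : ℚ) (m n : ℤ), (s = 1 ∨ s = -1) ∧ a = s * 2^m * 3^n := by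
      obtain ⟨m, n, h | h⟩ := hu1
      exacts [⟨1, m, n, Or.inl rfl, by rw [h]; ring⟩, ⟨-1, m, n, Or.inr rfl, by rw [h]; ring⟩]
    obtain ⟨δ, p, q, hδ, hy⟩ : ∃ (s : ℚ) (p q : ℤ), (s = 1 ∨ s = -1) ∧ 1 - a = s * 2^p * 3^q := by
      obtain ⟨p, q, h | h⟩ := hu2
      exacts [⟨1, p, q, Or.inl rfl, by rw [h]; ring⟩, ⟨-1, p, q, Or.inr rfl, by rw [h]; ring⟩]
    have h0 : ε * 2^m * 3^n + δ * 2^p * 3^q = 1 := by rw [← hx, ← hy]; ring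
    set M : ℤ := -(min 0 (min m p)) with hMdef
    set N : ℤ := -(min 0 (min n q)) with hNdef
    have hm1 : 0 ≤ m + M := by omega
    have hp1 : 0 ≤ p + M := by omega
    have hM1 : 0 ≤ M := by omega
    have hn1 : 0 ≤ n + N := by omega
    have hq1 : 0 ≤ q + N := by omega
    have hN1 : 0 ≤ N := by omega
    have h1' : ε * 2^(m+M) * 3^(n+N) + δ * 2^(p+M) * 3^(q+N) = 2^M * 3^N := by
      rw [zpow_add₀ (by norm_num : (2:ℚ) ≠ 0), zpow_add₀ (by norm_num : (2:ℚ) ≠ 0),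
        zpow_add₀ (by norm_num : (3:ℚ) ≠ 0), zpow_add₀ (by norm_num : (3:ℚ) ≠ 0)]
      calc ε * (2^m * 2^M) * (3^n * 3^N) + δ * (2^p * 2^M) * (3^q * 3^N)
          = (ε * 2^m * 3^n + δ * 2^p * 3^q) * (2^M * 3^N) := by ring
        _ = 1 * (2^M * 3^N) := by rw [h0]
        _ = 2^M * 3^N := one_mul _
    obtain ⟨A, hA⟩ : ∃ A : ℕ, (A:ℤ) = m + M := ⟨(m+M).toNat, Int.toNat_of_nonneg hm1⟩
    obtain ⟨B, hB⟩ : ∃ B : ℕ, (B:ℤ) = n + N := ⟨(n+N).toNat, Int.toNat_of_nonneg hn1⟩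
    obtain ⟨C, hC⟩ : ∃ C : ℕ, (C:ℤ) = p + M := ⟨(p+M).toNat, Int.toNat_of_nonneg hp1⟩
    obtain ⟨D, hD⟩ : ∃ D : ℕ, (D:ℤ) = q + N := ⟨(q+N).toNat, Int.toNat_of_nonneg hq1⟩
    obtain ⟨E, hE⟩ : ∃ E : ℕ, (E:ℤ) = M := ⟨M.toNat, Int.toNat_of_nonneg hM1⟩
    obtain ⟨F, hF⟩ : ∃ F : ℕ, (F:ℤ) = N := ⟨N.toNat, Int.toNat_of_nonneg hN1⟩
    rw [← hA, ← hB, ← hC, ← hD, ← hE, ← hF] at h1'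
    rw [zpow_natCast, zpow_natCast, zpow_natCast, zpow_natCast, zpow_natCast, zpow_natCast] at h1'
    have hmin2 : A = 0 ∨ C = 0 ∨ E = 0 := by omega
    have hmin3 : B = 0 ∨ D = 0 ∨ F = 0 := by omega
    rcases hε with rfl | rfl <;> rcases hδ with rfl | rfl
    · -- (+,+)
      have hq' : (2:ℚ)^A*3^B + 2^C*3^D = 2^E*3^F := by linarith
      have hNat : 2^A*3^B + 2^C*3^D = 2^E*3^F := by exact_mod_cast hq'
      rcases keyPP A B C D E F hNat hmin2 hmin3 with
        ⟨e1,e2,e3,e4,e5,e6⟩|⟨e1,e2,e3,e4,e5,e6⟩|⟨e1,e2,e3,e4,e5,e6⟩|⟨e1,e2,e3,e4,e5,e6⟩|⟨e1,e2,e3,e4,e5,e6⟩|⟨e1,e2,e3,e4,e5,e6⟩|⟨e1,e2,e3,e4,e5,e6⟩ <;>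
        rw [hx, show m = (A:ℤ) - E by omega, show n = (B:ℤ) - F by omega, e1, e2, e5, e6] <;>
        norm_num
    · -- (+,-)
      have hq' : (2:ℚ)^A*3^B = 2^E*3^F + 2^C*3^D := by linarith
      have hNat : 2^A*3^B = 2^E*3^F + 2^C*3^D := by exact_mod_cast hq'
      rcases keyPM A B C D E F hNat hmin2 hmin3 with
        ⟨e1,e2,e3,e4,e5,e6⟩|⟨e1,e2,e3,e4,e5,e6⟩|⟨e1,e2,e3,e4,e5,e6⟩|⟨e1,e2,e3,e4,e5,e6⟩|⟨e1,e2,e3,e4,e5,e6⟩|⟨e1,e2,e3,e4,e5,e6⟩|⟨e1,e2,e3,e4,e5,e6⟩ <;>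
        rw [hx, show m = (A:ℤ) - E by omega, show n = (B:ℤ) - F by omega, e1, e2, e5, e6] <;>
        norm_num
    · -- (-,+)
      have hq' : (2:ℚ)^C*3^D = 2^E*3^F + 2^A*3^B := by linarith
      have hNat : 2^C*3^D = 2^E*3^F + 2^A*3^B := by exact_mod_cast hq'
      have hmin2' : C = 0 ∨ A = 0 ∨ E = 0 := by tauto
      have hmin3' : D = 0 ∨ B = 0 ∨ F = 0 := by tauto
      rcases keyPM C D A B E F hNat hmin2' hmin3' with
        ⟨e1,e2,e3,e4,e5,e6⟩|⟨e1,e2,e3,e4,e5,e6⟩|⟨e1,e2,e3,e4,e5,e6⟩|⟨e1,e2,e3,e4,e5,e6⟩|⟨e1,e2,e3,e4,e5,e6⟩|⟨e1,e2,e3,e4,e5,e6⟩|⟨e1,e2,e3,e4,e5,e6⟩ <;>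
        rw [hx, show m = (A:ℤ) - E by omega, show n = (B:ℤ) - F by omega, e3, e4, e5, e6] <;>
        norm_num
    · -- (-,-) : impossible
      exfalso
      have p1 : (0:ℚ) < 2^A*3^B := by positivity
      have p2 : (0:ℚ) < 2^C*3^D := by positivity
      have p3 : (0:ℚ) < 2^E*3^F := by positivity
      linarith
  · rintro (rfl|rfl|rfl|rfl|rfl|rfl|rfl|rfl|rfl|rfl|rfl|rfl|rfl|rfl|rfl|rfl|rfl|rfl|rfl|rfl|rfl)
    · exact ⟨⟨1, 0, Or.inl (by norm_num)⟩, ⟨0, 0, Or.inr (by norm_num)⟩⟩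
    · exact ⟨⟨-1, 0, Or.inl (by norm_num)⟩, ⟨-1, 0, Or.inl (by norm_num)⟩⟩
    · exact ⟨⟨0, 0, Or.inr (by norm_num)⟩, ⟨1, 0, Or.inl (by norm_num)⟩⟩
    · exact ⟨⟨0, 1, Or.inl (by norm_num)⟩, ⟨1, 0, Or.inr (by norm_num)⟩⟩
    · exact ⟨⟨0, -1, Or.inl (by norm_num)⟩, ⟨1, -1, Or.inl (by norm_num)⟩⟩
    · exact ⟨⟨1, -1, Or.inl (by norm_num)⟩, ⟨0, -1, Or.inl (by norm_num)⟩⟩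
    · exact ⟨⟨-1, 1, Or.inl (by norm_num)⟩, ⟨-1, 0, Or.inr (by norm_num)⟩⟩
    · exact ⟨⟨-1, 0, Or.inr (by norm_num)⟩, ⟨-1, 1, Or.inl (by norm_num)⟩⟩
    · exact ⟨⟨1, 0, Or.inr (by norm_num)⟩, ⟨0, 1, Or.inl (by norm_num)⟩⟩
    · exact ⟨⟨2, 0, Or.inl (by norm_num)⟩, ⟨0, 1, Or.inr (by norm_num)⟩⟩
    · exact ⟨⟨-2, 0, Or.inl (by norm_num)⟩, ⟨-2, 1, Or.inl (by norm_num)⟩⟩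
    · exact ⟨⟨2, -1, Or.inl (by norm_num)⟩, ⟨0, -1, Or.inr (by norm_num)⟩⟩
    · exact ⟨⟨-2, 1, Or.inl (by norm_num)⟩, ⟨-2, 0, Or.inl (by norm_num)⟩⟩
    · exact ⟨⟨0, -1, Or.inr (by norm_num)⟩, ⟨2, -1, Or.inl (by norm_num)⟩⟩
    · exact ⟨⟨0, 1, Or.inr (by norm_num)⟩, ⟨2, 0, Or.inl (by norm_num)⟩⟩
    · exact ⟨⟨-3, 0, Or.inr (by norm_num)⟩, ⟨-3, 2, Or.inl (by norm_num)⟩⟩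
    · exact ⟨⟨0, -2, Or.inl (by norm_num)⟩, ⟨3, -2, Or.inl (by norm_num)⟩⟩
    · exact ⟨⟨-3, 2, Or.inl (by norm_num)⟩, ⟨-3, 0, Or.inr (by norm_num)⟩⟩
    · exact ⟨⟨3, -2, Or.inl (by norm_num)⟩, ⟨0, -2, Or.inl (by norm_num)⟩⟩
    · exact ⟨⟨0, 2, Or.inl (by norm_num)⟩, ⟨3, 0, Or.inr (by norm_num)⟩⟩
    · exact ⟨⟨3, 0, Or.inr (by norm_num)⟩, ⟨0, 2, Or.inl (by norm_num)⟩⟩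
end

section
/- Let g be the quotient of the free Lie algebra over ℚ on generators E_{ij}, indexed by pairs 0 ≤ i < j ≤ 4 (with the conventions E_{ji} = −E_{ij} and E_{ii} = 0), by the Lie ideal generated by the elements Σ_{j ≠ i} E_{ij} for each i ∈ {0,1,2,3,4} and the brackets [E_{ij}, E_{kl}] for all pairs with {i,j} ∩ {k,l} = ∅. Define e1 = E_{12} + E_{13} + E_{14}, e2 = E_{23}, e11 = −E_{14}, e22 = −E_{12}, e12 = −E_{24} in g. Then these elements satisfy [e1,e2] = [e11,e2] = [e1,e22] = 0 and [e11,e22] = −[e11,e12] = [e22,e12] = [e2−e1, e12]. -/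
noncomputable section

/-- Index set: pairs `0 ≤ i < j ≤ 4`. -/
abbrev PairIdx : Type := {p : Fin 5 × Fin 5 // p.1 < p.2}

/-- The free Lie algebra over ℚ on the generators `E i j`, `0 ≤ i < j ≤ 4`. -/
abbrev FreeL : Type := FreeLieAlgebra ℚ PairIdx

/-- The generators `E i j`, with the conventions `E j i = -E i j` and `E i i = 0`. -/
def E (i j : Fin 5) : FreeL :=
  if h : i < j then FreeLieAlgebra.of ℚ (⟨(i, j), h⟩ : PairIdx)
  else if h' : j < i then -FreeLieAlgebra.of ℚ (⟨(j, i), h'⟩ : PairIdx)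
  else 0

/-- The relations: `∑_{j ≠ i} E i j` for each `i`, and `⁅E i j, E k l⁆` whenever
`{i, j} ∩ {k, l} = ∅`. -/
def relSet : Set FreeL :=
  (Set.range fun i : Fin 5 => ∑ j ∈ Finset.univ.erase i, E i j) ∪
    {x | ∃ i j k l : Fin 5,
      (({i, j} : Finset (Fin 5)) ∩ ({k, l} : Finset (Fin 5))) = ∅ ∧ x = ⁅E i j, E k l⁆}

/-- The Lie ideal generated by the relations. -/
def relIdeal : LieIdeal ℚ FreeL := LieSubmodule.lieSpan ℚ FreeL relSet

/-- Ünver's Lie algebra `g`. -/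
abbrev G : Type := FreeL ⧸ relIdeal

/-- Projection to the quotient. -/
def pr (x : FreeL) : G := LieSubmodule.Quotient.mk (N := relIdeal) x

def e1 : G := pr (E 1 2 + E 1 3 + E 1 4)
def e2 : G := pr (E 2 3)
def e11 : G := pr (-E 1 4)
def e22 : G := pr (-E 1 2)
def e12 : G := pr (-E 2 4)

-- ### Auxiliary material

def f (i j : Fin 5) : G := pr (E i j)

lemma pr_add (x y : FreeL) : pr (x + y) = pr x + pr y := rfl

lemma pr_neg (x : FreeL) : pr (-x) = -pr x := rfl

lemma Ediag (i : Fin 5) : E i i = 0 := by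
  rw [E, dif_neg (lt_irrefl i), dif_neg (lt_irrefl i)]

lemma Eswap (i j : Fin 5) : E j i = -E i j := by
  rcases lt_trichotomy i j with h | h | h
  · rw [E, E, dif_neg (asymm h), dif_pos h, dif_pos h]
  · subst h; rw [Ediag, neg_zero]
  · rw [E, E, dif_pos h, dif_neg (asymm h), dif_pos h, neg_neg]

lemma fdiag (i : Fin 5) : f i i = 0 := by
  rw [f, Ediag]; rfl

lemma fswap (i j : Fin 5) : f j i = -f i j := by
  rw [f, f, Eswap, pr_neg]

lemma fs10 : f 1 0 = -f 0 1 := fswap 0 1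
lemma fs20 : f 2 0 = -f 0 2 := fswap 0 2
lemma fs21 : f 2 1 = -f 1 2 := fswap 1 2
lemma fs30 : f 3 0 = -f 0 3 := fswap 0 3
lemma fs31 : f 3 1 = -f 1 3 := fswap 1 3
lemma fs32 : f 3 2 = -f 2 3 := fswap 2 3
lemma fs40 : f 4 0 = -f 0 4 := fswap 0 4
lemma fs41 : f 4 1 = -f 1 4 := fswap 1 4
lemma fs42 : f 4 2 = -f 2 4 := fswap 2 4
lemma fs43 : f 4 3 = -f 3 4 := fswap 3 4

lemma prE_zero_of_mem {x : FreeL} (h : x ∈ relSet) : pr x = 0 :=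
  (LieSubmodule.Quotient.mk_eq_zero' (N := relIdeal)).mpr (LieSubmodule.subset_lieSpan h)

lemma fdisj (i j k l : Fin 5)
    (h : (({i, j} : Finset (Fin 5)) ∩ ({k, l} : Finset (Fin 5))) = ∅) :
    ⁅f i j, f k l⁆ = 0 := by
  rw [f, f]
  have : ⁅pr (E i j), pr (E k l)⁆ = pr ⁅E i j, E k l⁆ := rfl
  rw [this]
  exact prE_zero_of_mem (Or.inr ⟨i, j, k, l, h, rfl⟩)

lemma frel (i : Fin 5) : f i 0 + f i 1 + f i 2 + f i 3 + f i 4 = 0 := by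
  have h : pr (∑ j ∈ Finset.univ.erase i, E i j) = 0 :=
    prE_zero_of_mem (Or.inl ⟨i, rfl⟩)
  rw [Finset.sum_erase _ (Ediag i), Fin.sum_univ_five] at h
  simp only [pr_add] at h
  exact h

lemma z_12_23 : ⁅f 1 2, f 2 3⁆ = 0 := by
  have h1 : ⁅f 1 0 + f 1 1 + f 1 2 + f 1 3 + f 1 4, f 2 3⁆ = 0 := by rw [frel, zero_lie]
  have h2 : ⁅f 1 3, f 2 0 + f 2 1 + f 2 2 + f 2 3 + f 2 4⁆ = 0 := by rw [frel, lie_zero]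
  have h3 : ⁅f 3 0 + f 3 1 + f 3 2 + f 3 3 + f 3 4, f 1 2⁆ = 0 := by rw [frel, zero_lie]
  have hs1 : -⁅f 1 2, f 2 3⁆ = ⁅f 2 3, f 1 2⁆ := lie_skew _ _
  simp only [add_lie, lie_add, fdiag, fs10, fs20, fs21, fs30, fs31, fs32, fs40, fs41, fs42, fs43, lie_neg, neg_lie, zero_lie, lie_zero,
    fdisj 0 1 2 3 (by decide), fdisj 0 3 1 2 (by decide), fdisj 1 3 0 2 (by decide), fdisj 1 3 2 4 (by decide), fdisj 1 4 2 3 (by decide), fdisj 3 4 1 2 (by decide),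
    neg_zero, add_zero, zero_add, neg_neg] at h1 h2 h3
  linear_combination (norm := module) (1/2:ℚ) • h1 + (-1/2:ℚ) • h2 + (1/2:ℚ) • h3 + (-1/2:ℚ) • hs1

lemma z_13_23 : ⁅f 1 3, f 2 3⁆ = 0 := by
  have h1 : ⁅f 1 0 + f 1 1 + f 1 2 + f 1 3 + f 1 4, f 2 3⁆ = 0 := by rw [frel, zero_lie]
  have h2 : ⁅f 1 2, f 3 0 + f 3 1 + f 3 2 + f 3 3 + f 3 4⁆ = 0 := by rw [frel, lie_zero]
  have h3 : ⁅f 2 0 + f 2 1 + f 2 2 + f 2 3 + f 2 4, f 1 3⁆ = 0 := by rw [frel, zero_lie]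
  have hs1 : -⁅f 1 3, f 2 3⁆ = ⁅f 2 3, f 1 3⁆ := lie_skew _ _
  simp only [add_lie, lie_add, fdiag, fs10, fs20, fs21, fs30, fs31, fs32, fs40, fs41, fs42, fs43, lie_neg, neg_lie, zero_lie, lie_zero,
    fdisj 0 1 2 3 (by decide), fdisj 0 2 1 3 (by decide), fdisj 1 2 0 3 (by decide), fdisj 1 2 3 4 (by decide), fdisj 1 4 2 3 (by decide), fdisj 2 4 1 3 (by decide),
    neg_zero, add_zero, zero_add, neg_neg] at h1 h2 h3
  linear_combination (norm := module) (1/2:ℚ) • h1 + (1/2:ℚ) • h2 + (-1/2:ℚ) • h3 + (-1/2:ℚ) • hs1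

lemma z_13_12 : ⁅f 1 3, f 1 2⁆ = 0 := by
  have h1 : ⁅f 3 0 + f 3 1 + f 3 2 + f 3 3 + f 3 4, f 1 2⁆ = 0 := by rw [frel, zero_lie]
  have h2 : ⁅f 2 3, f 1 0 + f 1 1 + f 1 2 + f 1 3 + f 1 4⁆ = 0 := by rw [frel, lie_zero]
  have h3 : ⁅f 2 0 + f 2 1 + f 2 2 + f 2 3 + f 2 4, f 1 3⁆ = 0 := by rw [frel, zero_lie]
  have hs1 : -⁅f 1 2, f 1 3⁆ = ⁅f 1 3, f 1 2⁆ := lie_skew _ _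
  simp only [add_lie, lie_add, fdiag, fs10, fs20, fs21, fs30, fs31, fs32, fs40, fs41, fs42, fs43, lie_neg, neg_lie, zero_lie, lie_zero,
    fdisj 0 2 1 3 (by decide), fdisj 0 3 1 2 (by decide), fdisj 2 3 0 1 (by decide), fdisj 2 3 1 4 (by decide), fdisj 2 4 1 3 (by decide), fdisj 3 4 1 2 (by decide),
    neg_zero, add_zero, zero_add, neg_neg] at h1 h2 h3
  linear_combination (norm := module) (-1/2:ℚ) • h1 + (-1/2:ℚ) • h2 + (1/2:ℚ) • h3 + (-1/2:ℚ) • hs1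

lemma z_14_12 : ⁅f 1 4, f 1 2⁆ = 0 := by
  have h1 : ⁅f 4 0 + f 4 1 + f 4 2 + f 4 3 + f 4 4, f 1 2⁆ = 0 := by rw [frel, zero_lie]
  have h2 : ⁅f 2 4, f 1 0 + f 1 1 + f 1 2 + f 1 3 + f 1 4⁆ = 0 := by rw [frel, lie_zero]
  have h3 : ⁅f 2 0 + f 2 1 + f 2 2 + f 2 3 + f 2 4, f 1 4⁆ = 0 := by rw [frel, zero_lie]
  have hs1 : -⁅f 1 2, f 1 4⁆ = ⁅f 1 4, f 1 2⁆ := lie_skew _ _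
  simp only [add_lie, lie_add, fdiag, fs10, fs20, fs21, fs30, fs31, fs32, fs40, fs41, fs42, fs43, lie_neg, neg_lie, zero_lie, lie_zero,
    fdisj 0 2 1 4 (by decide), fdisj 0 4 1 2 (by decide), fdisj 2 3 1 4 (by decide), fdisj 2 4 0 1 (by decide), fdisj 2 4 1 3 (by decide), fdisj 3 4 1 2 (by decide),
    neg_zero, add_zero, zero_add, neg_neg] at h1 h2 h3
  linear_combination (norm := module) (-1/2:ℚ) • h1 + (-1/2:ℚ) • h2 + (1/2:ℚ) • h3 + (-1/2:ℚ) • hs1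

lemma z_23_24 : ⁅f 2 3, f 2 4⁆ = 0 := by
  have h1 : ⁅f 3 0 + f 3 1 + f 3 2 + f 3 3 + f 3 4, f 2 4⁆ = 0 := by rw [frel, zero_lie]
  have h2 : ⁅f 3 4, f 2 0 + f 2 1 + f 2 2 + f 2 3 + f 2 4⁆ = 0 := by rw [frel, lie_zero]
  have h3 : ⁅f 4 0 + f 4 1 + f 4 2 + f 4 3 + f 4 4, f 2 3⁆ = 0 := by rw [frel, zero_lie]
  have hs1 : -⁅f 2 3, f 2 4⁆ = ⁅f 2 4, f 2 3⁆ := lie_skew _ _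
  simp only [add_lie, lie_add, fdiag, fs10, fs20, fs21, fs30, fs31, fs32, fs40, fs41, fs42, fs43, lie_neg, neg_lie, zero_lie, lie_zero,
    fdisj 0 3 2 4 (by decide), fdisj 0 4 2 3 (by decide), fdisj 1 3 2 4 (by decide), fdisj 1 4 2 3 (by decide), fdisj 3 4 0 2 (by decide), fdisj 3 4 1 2 (by decide),
    neg_zero, add_zero, zero_add, neg_neg] at h1 h2 h3
  linear_combination (norm := module) (-1/2:ℚ) • h1 + (1/2:ℚ) • h2 + (1/2:ℚ) • h3 + (-1/2:ℚ) • hs1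

lemma z_12_24 : ⁅f 1 2, f 2 4⁆ = 0 := by
  have h1 : ⁅f 1 0 + f 1 1 + f 1 2 + f 1 3 + f 1 4, f 2 4⁆ = 0 := by rw [frel, zero_lie]
  have h2 : ⁅f 1 4, f 2 0 + f 2 1 + f 2 2 + f 2 3 + f 2 4⁆ = 0 := by rw [frel, lie_zero]
  have h3 : ⁅f 4 0 + f 4 1 + f 4 2 + f 4 3 + f 4 4, f 1 2⁆ = 0 := by rw [frel, zero_lie]
  have hs1 : -⁅f 1 2, f 2 4⁆ = ⁅f 2 4, f 1 2⁆ := lie_skew _ _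
  simp only [add_lie, lie_add, fdiag, fs10, fs20, fs21, fs30, fs31, fs32, fs40, fs41, fs42, fs43, lie_neg, neg_lie, zero_lie, lie_zero,
    fdisj 0 1 2 4 (by decide), fdisj 0 4 1 2 (by decide), fdisj 1 3 2 4 (by decide), fdisj 1 4 0 2 (by decide), fdisj 1 4 2 3 (by decide), fdisj 3 4 1 2 (by decide),
    neg_zero, add_zero, zero_add, neg_neg] at h1 h2 h3
  linear_combination (norm := module) (1/2:ℚ) • h1 + (-1/2:ℚ) • h2 + (1/2:ℚ) • h3 + (-1/2:ℚ) • hs1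

lemma z_14_24 : ⁅f 1 4, f 2 4⁆ = 0 := by
  have h1 : ⁅f 1 0 + f 1 1 + f 1 2 + f 1 3 + f 1 4, f 2 4⁆ = 0 := by rw [frel, zero_lie]
  have h2 : ⁅f 1 2, f 4 0 + f 4 1 + f 4 2 + f 4 3 + f 4 4⁆ = 0 := by rw [frel, lie_zero]
  have h3 : ⁅f 2 0 + f 2 1 + f 2 2 + f 2 3 + f 2 4, f 1 4⁆ = 0 := by rw [frel, zero_lie]
  have hs1 : -⁅f 1 4, f 2 4⁆ = ⁅f 2 4, f 1 4⁆ := lie_skew _ _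
  simp only [add_lie, lie_add, fdiag, fs10, fs20, fs21, fs30, fs31, fs32, fs40, fs41, fs42, fs43, lie_neg, neg_lie, zero_lie, lie_zero,
    fdisj 0 1 2 4 (by decide), fdisj 0 2 1 4 (by decide), fdisj 1 2 0 4 (by decide), fdisj 1 2 3 4 (by decide), fdisj 1 3 2 4 (by decide), fdisj 2 3 1 4 (by decide),
    neg_zero, add_zero, zero_add, neg_neg] at h1 h2 h3
  linear_combination (norm := module) (1/2:ℚ) • h1 + (1/2:ℚ) • h2 + (-1/2:ℚ) • h3 + (-1/2:ℚ) • hs1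


lemma e1_eq : e1 = f 1 2 + f 1 3 + f 1 4 := rfl
lemma e2_eq : e2 = f 2 3 := rfl
lemma e11_eq : e11 = -f 1 4 := rfl
lemma e22_eq : e22 = -f 1 2 := rfl
lemma e12_eq : e12 = -f 2 4 := rfl

theorem stmt19 :
    ⁅e1, e2⁆ = 0 ∧ ⁅e11, e2⁆ = 0 ∧ ⁅e1, e22⁆ = 0 ∧
    ⁅e11, e22⁆ = ⁅e2 - e1, e12⁆ ∧ -⁅e11, e12⁆ = ⁅e2 - e1, e12⁆ ∧
    ⁅e22, e12⁆ = ⁅e2 - e1, e12⁆ := by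
  have d1423 : ⁅f 1 4, f 2 3⁆ = 0 := fdisj 1 4 2 3 (by decide)
  have d1324 : ⁅f 1 3, f 2 4⁆ = 0 := fdisj 1 3 2 4 (by decide)
  refine ⟨?_, ?_, ?_, ?_, ?_, ?_⟩ <;>
  · simp only [e1_eq, e2_eq, e11_eq, e22_eq, e12_eq, sub_lie, add_lie, lie_add, lie_neg,
      neg_lie, lie_self, z_12_23, z_13_23, z_13_12, z_14_12, z_23_24, z_12_24, z_14_24,
      d1423, d1324, neg_zero, add_zero, zero_add, neg_neg, sub_zero, zero_sub, sub_self]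

end
end
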